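/- arXiv:2211.06690 — 3 statements merged into one kernel-verified Lean document; each statement's English description precedes it below -/
import Mathlib

section
/- In a path graph (repeater line) on vertices v_1, v_2, ..., v_n with edges exactly {v_i, v_{i+1}}, after performing local complementations sequentially at v_2, v_3, ..., v_i (in that order), the neighborhood of v_{i+1} in the resulting graph is {v_1, ..., v_i, v_{i+2}} (omitting v_{i+2} if i+1 = n). -/
variable {V : Type*}

/-- Local complementation at vertex `v`. -/
def lc (G : SimpleGraph V) (v : V) : SimpleGraph V where
  Adj a b := a ≠ b ∧ (((G.Adj v a ∧ G.Adj v b) ∧ ¬ G.Adj a b) ∨ (¬(G.Adj v a ∧ G.Adj v b) ∧ G.Adj a b))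
  symm := by
    constructor
    rintro a b ⟨hne, h⟩
    refine ⟨hne.symm, ?_⟩
    rcases h with ⟨⟨h1, h2⟩, h3⟩ | ⟨h1, h2⟩
    · exact Or.inl ⟨⟨h2, h1⟩, fun hb => h3 hb.symm⟩
    · exact Or.inr ⟨fun hb => h1 ⟨hb.2, hb.1⟩, h2.symm⟩
  loopless := by constructor; rintro a ⟨hne, -⟩; exact hne rfl

/-- Vertex deletion: remove `v` and all incident edges (leaving `v` isolated). -/
def del (G : SimpleGraph V) (v : V) : SimpleGraph V where
  Adj a b := G.Adj a b ∧ a ≠ v ∧ b ≠ v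
  symm := by constructor; rintro a b ⟨h, ha, hb⟩; exact ⟨h.symm, hb, ha⟩
  loopless := by constructor; rintro a ⟨h, -⟩; exact G.loopless.irrefl a h

def seqLC (G : SimpleGraph V) (l : List V) : SimpleGraph V := l.foldl lc G

/-- Path graph on vertices 1,...,n inside ℕ. -/
def pathN (n : ℕ) : SimpleGraph ℕ :=
  SimpleGraph.fromRel (fun a b => 1 ≤ a ∧ a + 1 = b ∧ b ≤ n)

def Xmeas (G : SimpleGraph V) (v w : V) : SimpleGraph V :=
  lc (del (lc (lc G w) v) v) w

def induceOn (G : SimpleGraph V) (S : Set V) : SimpleGraph V where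
  Adj a b := G.Adj a b ∧ a ∈ S ∧ b ∈ S
  symm := by constructor; rintro a b ⟨h, ha, hb⟩; exact ⟨h.symm, hb, ha⟩
  loopless := by constructor; rintro a ⟨h, -⟩; exact G.loopless.irrefl a h

def starG (c : V) : SimpleGraph V where
  Adj a b := a ≠ b ∧ (a = c ∨ b = c)
  symm := by constructor; rintro a b ⟨hne, h⟩; exact ⟨hne.symm, h.symm⟩
  loopless := by constructor; rintro a ⟨hne, -⟩; exact hne rfl

def gridGraph : SimpleGraph (ℤ × ℤ) where
  Adj u v := (u.1 - v.1).natAbs + (u.2 - v.2).natAbs = 1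
  symm := by
    constructor
    intro u v h
    omega
  loopless := by constructor; intro u h; simp at h

/-! Local complementation at the end vertex `1` changes nothing, and after local complementation
at `1, …, k` the path becomes `pathLC n k`: among `1, …, k + 1`, a vertex `b` is joined to all
smaller vertices exactly when `b = k + 1` or `b ≡ k (mod 2)`, and beyond that the graph is the
path `k + 1, k + 2, …, n`. The neighbourhood of `k + 1` is `{1, …, k, k + 2}`, so local
complementation there flips the parity condition on `1, …, k` and joins `k + 2` to everything
below it, which is the same description with `k + 1` in place of `k`. -/

def pathLC (n k : ℕ) : SimpleGraph ℕ :=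
  SimpleGraph.fromRel fun a b => 1 ≤ a ∧ a < b ∧ b ≤ n ∧
    (b = k + 1 ∨ (b ≤ k ∧ (b + k) % 2 = 0) ∨ (k + 1 ≤ a ∧ b = a + 1))

lemma pathLC_zero (n : ℕ) : pathLC n 0 = pathN n := by
  ext a b
  simp only [pathLC, pathN, SimpleGraph.fromRel_adj]
  omega

lemma pathLC_one (n : ℕ) : pathLC n 1 = pathN n := by
  ext a b
  simp only [pathLC, pathN, SimpleGraph.fromRel_adj]
  omega

lemma pathLC_adj_of_lt {n k a b : ℕ} (h : a < b) :
    (pathLC n k).Adj a b ↔ 1 ≤ a ∧ b ≤ n ∧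
      (b = k + 1 ∨ (b ≤ k ∧ (b + k) % 2 = 0) ∨ (k + 1 ≤ a ∧ b = a + 1)) := by
  simp only [pathLC, SimpleGraph.fromRel_adj]
  omega

lemma pathLC_adj_succ {n k a : ℕ} (hk : k + 1 ≤ n) :
    (pathLC n k).Adj (k + 1) a ↔ (1 ≤ a ∧ a ≤ k) ∨ (a = k + 2 ∧ k + 2 ≤ n) := by
  simp only [pathLC, SimpleGraph.fromRel_adj, true_or, and_true]
  omega

lemma lc_pathLC {n k : ℕ} (hk : k + 1 ≤ n) : lc (pathLC n k) (k + 1) = pathLC n (k + 1) := by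
  ext a b
  wlog hab : a < b generalizing a b
  · rcases (not_lt.1 hab).eq_or_lt with rfl | hba
    · simp only [SimpleGraph.irrefl]
    · simpa only [SimpleGraph.adj_comm] using this b a hba
  simp only [lc, pathLC_adj_succ hk, pathLC_adj_of_lt hab]
  omega

lemma seqLC_pathLC_range' {n j k : ℕ} (h : j + k ≤ n) :
    seqLC (pathLC n j) (List.range' (j + 1) k) = pathLC n (j + k) := by
  induction k generalizing j with
  | zero => rfl
  | succ k ih =>
    rw [List.range'_succ, seqLC, List.foldl_cons, ← seqLC, lc_pathLC (by omega),
      ih (by omega), Nat.add_right_comm, Nat.add_assoc]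

lemma neighborSet_pathLC_succ {n k : ℕ} (hk : k + 1 ≤ n) :
    (pathLC n k).neighborSet (k + 1) = {w | (1 ≤ w ∧ w ≤ k) ∨ (w = k + 2 ∧ k + 2 ≤ n)} := by
  ext w
  exact pathLC_adj_succ hk

theorem seqLC_path_neighborSet_general (n i : ℕ) (hin : i + 1 ≤ n) :
    (seqLC (pathN n) (List.range' 2 (i - 1))).neighborSet (i + 1) =
      {w : ℕ | (1 ≤ w ∧ w ≤ i) ∨ (w = i + 2 ∧ i + 2 ≤ n)} := by
  have hseq : seqLC (pathN n) (List.range' 2 (i - 1)) = pathLC n i := by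
    rcases i.eq_zero_or_pos with rfl | hi
    · exact (pathLC_zero n).symm
    · rw [← pathLC_one, seqLC_pathLC_range' (by omega)]
      congr 1
      omega
  rw [hseq, neighborSet_pathLC_succ hin]

/-- in the path graph on vertices 1,...,n, after local complementations
at v₂,...,v_i (in order), the neighborhood of v_{i+1} is {v₁,...,v_i, v_{i+2}}
(omitting v_{i+2} when i+1 = n). -/
theorem seqLC_path_neighborSet (n i : ℕ) (hi : 1 ≤ i) (hin : i + 1 ≤ n) :
    (seqLC (pathN n) (List.range' 2 (i - 1))).neighborSet (i + 1) =
      {w : ℕ | (1 ≤ w ∧ w ≤ i) ∨ (w = i + 2 ∧ i + 2 ≤ n)} :=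
  seqLC_path_neighborSet_general n i hin
end

section
/- In the sequential local complementation protocol on a path graph v_1,...,v_m, for any two even-position vertices e_i = v_{2i} and e_j = v_{2j} with i < j, the vertices e_i and e_j are adjacent for the first time exactly after the local complementation at v_{2j-1}, and thereafter each subsequent local complementation at an odd-position vertex removes the edge {e_i, e_j} while each local complementation at an even-position vertex restores it. -/
variable {V : Type*}

/-! Local complementation at `v₂, …, v_t` turns the path into an explicit graph `pathAfterLC m t`.
Inductively, the neighbourhood of `v_{t+1}` is `{v₁, …, v_t, v_{t+2}}`, so local complementation
at `v_{t+1}` flips every edge among `v₁, …, v_t` (which switches the parity in the closed form)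
and joins `v_{t+2}` to all of them. Reading off the edge `{v_{2i}, v_{2j}}` from the closed form
gives the theorem. -/

lemma seqLC_append_singleton (G : SimpleGraph V) (l : List V) (v : V) :
    seqLC G (l ++ [v]) = lc (seqLC G l) v := by
  simp only [seqLC, List.foldl_append, List.foldl_cons, List.foldl_nil]

lemma lc_adj (G : SimpleGraph V) (v a b : V) :
    (lc G v).Adj a b ↔ a ≠ b ∧ (((G.Adj v a ∧ G.Adj v b) ∧ ¬ G.Adj a b) ∨
      (¬(G.Adj v a ∧ G.Adj v b) ∧ G.Adj a b)) := Iff.rfl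

/-- The vertex `t + 1` is joined to each of `1, …, t`, a vertex `b ≤ t` is joined to every
smaller vertex exactly when `b ≡ t (mod 2)`, and the path `t + 1, …, m` is untouched. -/
def pathAfterLC (m t : ℕ) : SimpleGraph ℕ :=
  SimpleGraph.fromRel fun a b =>
    a < b ∧ 1 ≤ a ∧ b ≤ m ∧ ((b ≤ t ∧ b % 2 = t % 2) ∨ b = t + 1 ∨ (b = a + 1 ∧ t < a))

lemma pathAfterLC_adj_of_lt {m t a b : ℕ} (hab : a < b) :
    (pathAfterLC m t).Adj a b ↔
      1 ≤ a ∧ b ≤ m ∧ ((b ≤ t ∧ b % 2 = t % 2) ∨ b = t + 1 ∨ (b = a + 1 ∧ t < a)) := by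
  simp only [pathAfterLC, SimpleGraph.fromRel_adj]
  constructor
  · rintro ⟨-, ⟨-, h⟩ | ⟨hba, -⟩⟩
    · exact h
    · omega
  · exact fun h => ⟨hab.ne, Or.inl ⟨hab, h⟩⟩

lemma pathAfterLC_one (m : ℕ) : pathAfterLC m 1 = pathN m := by
  ext a b
  simp only [pathAfterLC, pathN, SimpleGraph.fromRel_adj]
  omega

lemma pathAfterLC_adj_succ (m t x : ℕ) (ht : t + 1 ≤ m) :
    (pathAfterLC m t).Adj (t + 1) x ↔ (1 ≤ x ∧ x ≤ t) ∨ (x = t + 2 ∧ t + 2 ≤ m) := by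
  simp only [pathAfterLC, SimpleGraph.fromRel_adj, true_or, or_true, and_true]
  omega

lemma lc_pathAfterLC (m t : ℕ) (ht : t + 1 ≤ m) :
    lc (pathAfterLC m t) (t + 1) = pathAfterLC m (t + 1) := by
  have adj_iff_of_lt : ∀ a b, a < b →
      ((lc (pathAfterLC m t) (t + 1)).Adj a b ↔ (pathAfterLC m (t + 1)).Adj a b) := by
    intro a b hab
    rw [lc_adj, pathAfterLC_adj_succ m t a ht, pathAfterLC_adj_succ m t b ht,
      pathAfterLC_adj_of_lt hab, pathAfterLC_adj_of_lt hab]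
    omega
  ext a b
  rcases lt_trichotomy a b with hab | rfl | hab
  · exact adj_iff_of_lt a b hab
  · simp only [SimpleGraph.irrefl]
  · rw [SimpleGraph.adj_comm, SimpleGraph.adj_comm (pathAfterLC _ _)]
    exact adj_iff_of_lt b a hab

lemma seqLC_pathN_range' (m n : ℕ) (hn : n + 1 ≤ m) :
    seqLC (pathN m) (List.range' 2 n) = pathAfterLC m (n + 1) := by
  induction n with
  | zero => exact (pathAfterLC_one m).symm
  | succ n ih =>
    rw [List.range'_1_concat, seqLC_append_singleton, ih (by omega),
      show 2 + n = n + 1 + 1 by omega, lc_pathAfterLC m _ hn]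

/-- for even-position vertices e_i = v_{2i}, e_j = v_{2j} (i < j) of the
path graph, under the sequential local complementation protocol at v₂, v₃, ...,
they become adjacent for the first time exactly after the local complementation at
v_{2j-1}; thereafter each LC at an odd-position vertex removes the edge and each LC
at an even-position vertex restores it (so for t ≥ 2j, adjacency holds iff t is even). -/
theorem path_even_vertices_edge_toggle (m i j : ℕ) (hi : 1 ≤ i) (hij : i < j)
    (hjm : 2 * j + 1 ≤ m) :
    (∀ t, 1 ≤ t → t < 2 * j - 1 →
        ¬ (seqLC (pathN m) (List.range' 2 (t - 1))).Adj (2 * i) (2 * j)) ∧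
    (seqLC (pathN m) (List.range' 2 (2 * j - 2))).Adj (2 * i) (2 * j) ∧
    (∀ t, 2 * j ≤ t → t ≤ m - 2 →
        ((seqLC (pathN m) (List.range' 2 (t - 1))).Adj (2 * i) (2 * j) ↔ t % 2 = 0)) := by
  have hlt : 2 * i < 2 * j := by omega
  refine ⟨fun t ht₁ ht₂ => ?_, ?_, fun t ht₁ ht₂ => ?_⟩
  · rw [seqLC_pathN_range' m _ (by omega), pathAfterLC_adj_of_lt hlt]
    omega
  · rw [seqLC_pathN_range' m _ (by omega), pathAfterLC_adj_of_lt hlt]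
    omega
  · rw [seqLC_pathN_range' m _ (by omega), pathAfterLC_adj_of_lt hlt]
    omega
end

section
/- In the X protocol along a shortest grid path v_1,...,v_l, the final neighborhood of v_1 after all l−2 intermediate X-measurements satisfies the closed form: N^{(l-2)}_{v_1} equals the union of the initial neighborhoods of the alternate vertices N^{(0)}_{v_{l-1}} ∪ N^{(0)}_{v_{l-3}} ∪ N^{(0)}_{v_{l-5}} ∪ ⋯ minus the pairwise intersections N^{(0)}_{v_{l-1}} ∩ N^{(0)}_{v_{l-3}}, N^{(0)}_{v_{l-3}} ∩ N^{(0)}_{v_{l-5}}, ⋯, under the hypothesis that neighborhoods of vertices at path-distance ≥ 4 are disjoint. -/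
/-- closed form for the X-protocol neighborhood recursion. Writing
`A k` for the initial neighborhood `N⁰_{v_{2k+1}}` of the alternating path vertices,
assume neighborhoods of vertices at path-distance ≥ 4 are disjoint (`|i−j| ≥ 2` in this
indexing). With `B 0 = A 0` and `B (k+1) = (A (k+1) ∪ B k) \ (A (k+1) ∩ B k)`
(symmetric difference), the result is the union of all the `A k` minus the union of
the consecutive pairwise intersections. -/
theorem x_protocol_closed_form {V : Type*} [DecidableEq V] (m : ℕ) (A B : ℕ → Finset V)
    (hdisj : ∀ i j, i + 2 ≤ j → j ≤ m → Disjoint (A i) (A j))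
    (hB0 : B 0 = A 0)
    (hBrec : ∀ k, B (k + 1) = (A (k + 1) ∪ B k) \ (A (k + 1) ∩ B k)) :
    B m = (Finset.range (m + 1)).biUnion A \
        (Finset.range m).biUnion (fun i => A i ∩ A (i + 1)) := by
  suffices h : ∀ k, k ≤ m → B k = (Finset.range (k + 1)).biUnion A \
      (Finset.range k).biUnion (fun i => A i ∩ A (i + 1)) from h m le_rfl
  intro k
  induction k with
  | zero => intro _; simp [hB0]
  | succ k IH =>
    intro hk1
    have IH' := IH (Nat.le_of_succ_le hk1)
    rw [hBrec, IH']
    ext x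
    simp only [Finset.mem_sdiff, Finset.mem_union, Finset.mem_inter, Finset.mem_biUnion,
      Finset.mem_range]
    -- disjointness fact: if x ∈ A (k+1) then x ∉ A i for i + 2 ≤ k + 1
    have D : x ∈ A (k + 1) → ∀ i, i + 2 ≤ k + 1 → x ∉ A i := by
      intro hP i hi hAi
      exact Finset.disjoint_left.mp (hdisj i (k + 1) hi hk1) hAi hP
    constructor
    · rintro ⟨hPQ, hN⟩
      rcases hPQ with hP | ⟨⟨i, hi, hAi⟩, hR⟩
      · refine ⟨⟨k + 1, by omega, hP⟩, ?_⟩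
        rintro ⟨i, hi, hAi, hAi1⟩
        rcases Nat.lt_or_ge i k with hik | hik
        · exact D hP i (by omega) hAi
        · have hik' : i = k := by omega
          rw [hik'] at hAi hAi1
          -- x ∈ A k and x ∈ A (k+1), so P ∧ Q holds; hN forces R
          have hR : ∃ j, j < k ∧ x ∈ A j ∧ x ∈ A (j + 1) := by
            by_contra hR
            exact hN ⟨hP, ⟨k, by omega, hAi⟩, fun ⟨j, hj, hj1, hj2⟩ => hR ⟨j, hj, hj1, hj2⟩⟩
          obtain ⟨j, hj, hj1, hj2⟩ := hR
          exact D hP j (by omega) hj1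
      · refine ⟨⟨i, by omega, hAi⟩, ?_⟩
        rintro ⟨j, hj, hj1, hj2⟩
        rcases Nat.lt_or_ge j k with hjk | hjk
        · exact hR ⟨j, hjk, hj1, hj2⟩
        · have hjk' : j = k := by omega
          rw [hjk'] at hj2
          exact hN ⟨hj2, ⟨i, hi, hAi⟩, fun ⟨j', hj', h1, h2⟩ => hR ⟨j', hj', h1, h2⟩⟩
    · rintro ⟨⟨i, hi, hAi⟩, hN⟩
      by_cases hP : x ∈ A (k + 1)
      · refine ⟨Or.inl hP, ?_⟩
        rintro ⟨-, ⟨j, hj, hAj⟩, hR⟩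
        rcases Nat.lt_or_ge j k with hjk | hjk
        · exact D hP j (by omega) hAj
        · have hjk' : j = k := by omega
          rw [hjk'] at hAj
          exact hN ⟨k, by omega, hAj, hP⟩
      · have hik : i < k + 1 := by
          by_contra h
          have hi' : i = k + 1 := by omega
          rw [hi'] at hAi
          exact hP hAi
        refine ⟨Or.inr ⟨⟨i, hik, hAi⟩, ?_⟩, fun ⟨hP', _⟩ => hP hP'⟩
        rintro ⟨j, hj, hj1, hj2⟩
        exact hN ⟨j, by omega, hj1, hj2⟩
end
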